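/- Let G be a finite group acting doubly transitively on a finite set X = {1,...,k}, and let F be a field of characteristic p > 0. If p does not divide k and p does not divide the order of the two-point stabilizer G_{1,2}, then the FG-submodule W = {x ∈ F^k : x_1 + ... + x_k = 0} of the permutation module F^k is irreducible. -/

import Mathlib

/-!
Take `x ∈ U` with `x a ≠ 0` and average it over the stabilizer `G_a`. For `i ≠ a` the map
`h ↦ h⁻¹ • i` sends exactly `m = |G_{a,b}|` elements of `G_a` to each point `j ≠ a`, so the
average takes the value `m • ∑_{j ≠ a} x j = -m x a` off `a`; lying in `W`, it is
`-m x a • (𝟙 - k eₐ)`. As `p ∤ m`, `𝟙 - k eₐ ∈ U`, hence by transitivity `𝟙 - k e_b ∈ U` for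
every `b`. Their differences are `k (e_b - eₐ)`, and as `p ∤ k` these vectors, which span `W`,
lie in `U`.
-/

open Finset

section SumZero

variable {X F : Type*} [Fintype X] [DecidableEq X] [CommRing F]

theorem eq_smul_one_sub_card_smul_single_of_sum_eq_zero {y : X → F} {a : X} {c : F}
    (hy : ∑ i, y i = 0) (hc : ∀ i ≠ a, y i = c) :
    y = c • (1 - (Fintype.card X : F) • Pi.single a 1) := by
  have hdecomp : y = fun i => c + (Pi.single a (y a - c) : X → F) i := by
    funext i
    rcases eq_or_ne i a with rfl | hi
    · simp
    · simp [hi, hc i hi]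
  have hya : y a - c = -(Fintype.card X * c) := by
    rw [hdecomp, sum_add_distrib, Finset.sum_pi_single', if_pos (mem_univ a)] at hy
    simp only [sum_const, card_univ, nsmul_eq_mul] at hy
    linear_combination hy
  rw [hdecomp, hya]
  funext i
  rcases eq_or_ne i a with rfl | hi
  · simp
    ring
  · simp [hi]

theorem eq_sum_smul_single_sub_single_of_sum_eq_zero {z : X → F} (hz : ∑ i, z i = 0) (a : X) :
    z = ∑ b, z b • (Pi.single b 1 - Pi.single a 1) := by
  simp_rw [smul_sub, sum_sub_distrib, ← sum_smul, hz, zero_smul, sub_zero]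
  funext i
  simp [Pi.single_apply]

end SumZero

namespace MulAction

variable {G X : Type*} [Group G] [MulAction G X]

theorem card_transporter_pair_eq {a b c d a' b' : X} {σ τ : G}
    (hσ : σ • a' = a ∧ σ • b' = b) (hτ : τ • a' = c ∧ τ • b' = d) :
    Nat.card {g : G // g • a = c ∧ g • b = d} =
      Nat.card {g : G // g • a' = a' ∧ g • b' = b'} :=
  Nat.card_congr <| ((Equiv.mulLeft τ⁻¹).trans (Equiv.mulRight σ)).subtypeEquiv fun g => by
    simp [mul_smul, hσ, inv_smul_eq_iff, hτ]

variable [IsMultiplyPretransitive G X 2]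

theorem card_transporter_pair_eq_of_two_pretransitive {a b c d a' b' : X}
    (hab : a ≠ b) (hcd : c ≠ d) (ha'b' : a' ≠ b') :
    Nat.card {g : G // g • a = c ∧ g • b = d} =
      Nat.card {g : G // g • a' = a' ∧ g • b' = b'} := by
  obtain ⟨σ, hσ⟩ := is_two_pretransitive_iff.mp ‹_› ha'b' hab
  obtain ⟨τ, hτ⟩ := is_two_pretransitive_iff.mp ‹_› ha'b' hcd
  exact card_transporter_pair_eq hσ hτ

variable [Fintype G] [DecidableEq X]

theorem card_filter_fixing_inv_smul_eq {x₀ y₀ a i : X} (h₀ : x₀ ≠ y₀) (hi : i ≠ a) (j : X) :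
    #{h : G | h • a = a ∧ h⁻¹ • i = j} =
      if j = a then 0 else Nat.card {g : G // g • x₀ = x₀ ∧ g • y₀ = y₀} := by
  split_ifs with hj
  · subst hj
    refine card_eq_zero.mpr (filter_eq_empty_iff.mpr fun h _ ⟨hfix, hij⟩ => hi ?_)
    rwa [inv_smul_eq_iff, hfix] at hij
  · rw [← card_transporter_pair_eq_of_two_pretransitive (Ne.symm hj) (Ne.symm hi) h₀,
      Nat.card_eq_fintype_card, Fintype.card_subtype]
    simp only [inv_smul_eq_iff, eq_comm (a := i)]

theorem sum_fixing_inv_smul_apply [Fintype X] {F : Type*} [CommRing F] {x₀ y₀ a i : X}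
    (h₀ : x₀ ≠ y₀) (hi : i ≠ a) {x : X → F} (hx : ∑ j, x j = 0) :
    ∑ h ∈ {h : G | h • a = a}, x (h⁻¹ • i) =
      -(Nat.card {g : G // g • x₀ = x₀ ∧ g • y₀ = y₀} * x a) := by
  rw [← sum_fiberwise_of_maps_to (g := fun h : G => h⁻¹ • i) (t := univ)
    fun _ _ => mem_univ _]
  have hfiber (j : X) : ∑ h ∈ {h : G | h • a = a} with h⁻¹ • i = j, x (h⁻¹ • i) =
      (if j = a then 0 else Nat.card {g : G // g • x₀ = x₀ ∧ g • y₀ = y₀}) • x j := by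
    rw [sum_congr rfl fun h hh => by rw [(mem_filter.mp hh).2], sum_const, filter_filter,
      card_filter_fixing_inv_smul_eq h₀ hi]
  simp_rw [hfiber, ite_smul, zero_smul, sum_ite, sum_const_zero, zero_add, filter_ne',
    ← smul_sum, sum_erase_eq_sub (mem_univ a), hx, nsmul_eq_mul]
  ring

end MulAction

section InvariantSubmodule

open MulAction

variable {G X F : Type*} [Group G] [MulAction G X] [Fintype X] [DecidableEq X] [Field F]
  {U : Submodule F (X → F)} (hU : ∀ g : G, ∀ x ∈ U, (fun i => x (g⁻¹ • i)) ∈ U)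
include hU

theorem one_sub_card_smul_single_mem_of_apply_ne_zero [Fintype G]
    [IsMultiplyPretransitive G X 2] (hUW : ∀ x ∈ U, ∑ i, x i = 0) {x₀ y₀ : X} (h₀ : x₀ ≠ y₀)
    (hm : (Nat.card {g : G // g • x₀ = x₀ ∧ g • y₀ = y₀} : F) ≠ 0)
    {x : X → F} (hx : x ∈ U) {a : X} (hxa : x a ≠ 0) :
    1 - (Fintype.card X : F) • Pi.single a 1 ∈ U := by
  set y : X → F := ∑ h ∈ {h : G | h • a = a}, fun i => x (h⁻¹ • i)
  have hyU : y ∈ U := U.sum_mem fun h _ => hU h x hx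
  set c : F := -(Nat.card {g : G // g • x₀ = x₀ ∧ g • y₀ = y₀} * x a)
  have hc : c ≠ 0 := neg_ne_zero.mpr (mul_ne_zero hm hxa)
  have hy : y = c • (1 - (Fintype.card X : F) • Pi.single a 1) :=
    eq_smul_one_sub_card_smul_single_of_sum_eq_zero (hUW y hyU) fun i hi => by
      simp only [y, Finset.sum_apply]
      exact sum_fixing_inv_smul_apply h₀ hi (hUW x hx)
  have hcy := U.smul_mem c⁻¹ hyU
  rwa [hy, smul_smul, inv_mul_cancel₀ hc, one_smul] at hcy

theorem single_sub_single_mem [IsPretransitive G X] (hk : (Fintype.card X : F) ≠ 0) {a : X}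
    (ha : 1 - (Fintype.card X : F) • Pi.single a 1 ∈ U) (b : X) :
    Pi.single b 1 - Pi.single a 1 ∈ U := by
  obtain ⟨g, rfl⟩ := exists_smul_eq G a b
  have hb : 1 - (Fintype.card X : F) • Pi.single (g • a) 1 ∈ U := by
    convert hU g _ ha using 1
    funext i
    simp [Pi.single_apply, inv_smul_eq_iff]
  have hdiff := U.smul_mem (Fintype.card X : F)⁻¹ (U.sub_mem ha hb)
  rwa [sub_sub_sub_cancel_left, ← smul_sub, smul_smul, inv_mul_cancel₀ hk, one_smul] at hdiff

end InvariantSubmodule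

/-- Lemma 3.1: If a finite group `G` acts doubly transitively on `X = {1,…,k}`,
`F` has characteristic `p > 0`, `p ∤ k` and `p ∤ |G_{1,2}|`, then the sum-zero
submodule `W` of the permutation module `F^k` is irreducible (it is nonzero and
its only `G`-invariant subspaces are `⊥` and `W`). -/
theorem stmt0 {G : Type*} [Group G] [Finite G] {k : ℕ} (hk : 2 ≤ k)
    [MulAction G (Fin k)]
    (h2t : ∀ a b c d : Fin k, a ≠ b → c ≠ d → ∃ g : G, g • a = c ∧ g • b = d)
    (F : Type*) [Field F] (p : ℕ) [CharP F p]
    (hpk : ¬ p ∣ k)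
    (hstab : ¬ p ∣ Nat.card {g : G // g • (⟨0, by omega⟩ : Fin k) = ⟨0, by omega⟩ ∧
      g • (⟨1, by omega⟩ : Fin k) = ⟨1, by omega⟩})
    (W : Submodule F (Fin k → F))
    (hW : ∀ x : Fin k → F, x ∈ W ↔ ∑ i, x i = 0) :
    W ≠ ⊥ ∧
      ∀ U : Submodule F (Fin k → F), U ≤ W →
        (∀ g : G, ∀ x ∈ U, (fun i => x (g⁻¹ • i)) ∈ U) →
        U = ⊥ ∨ U = W := by
  have := Fintype.ofFinite G
  have := MulAction.is_two_pretransitive_iff.mpr fun hab hcd => h2t _ _ _ _ hab hcd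
  have := MulAction.isPretransitive_of_is_two_pretransitive (G := G) (α := Fin k)
  set i₀ : Fin k := ⟨0, by omega⟩
  set i₁ : Fin k := ⟨1, by omega⟩
  have h₀ : i₀ ≠ i₁ := by simp [i₀, i₁]
  have hkF : (Fintype.card (Fin k) : F) ≠ 0 := by
    rwa [Fintype.card_fin, Ne, CharP.cast_eq_zero_iff F p]
  have hmF := (CharP.cast_eq_zero_iff F p _).not.mpr hstab
  refine ⟨(Submodule.ne_bot_iff W).mpr ⟨Pi.single i₀ 1 - Pi.single i₁ 1, (hW _).mpr ?_,
    fun h => by simpa [h₀] using congrFun h i₀⟩, fun U hUW hU => ?_⟩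
  · simp
  refine or_iff_not_imp_left.mpr fun hU0 => le_antisymm hUW fun z hz => ?_
  obtain ⟨x, hx, hx0⟩ := (Submodule.ne_bot_iff U).mp hU0
  obtain ⟨a, hxa⟩ := Function.ne_iff.mp hx0
  have ha := one_sub_card_smul_single_mem_of_apply_ne_zero hU
    (fun y hy => (hW y).mp (hUW hy)) h₀ hmF hx hxa
  rw [eq_sum_smul_single_sub_single_of_sum_eq_zero ((hW z).mp hz) a]
  exact U.sum_mem fun b _ => U.smul_mem _ (single_sub_single_mem hU hkF ha b)
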